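/- Let P be a real symmetric positive definite n×n matrix and A a real n×n matrix such that P·A is symmetric. Let J be a finite index set and for each j ∈ J let rⱼ ∈ ℝⁿ be a nonzero eigenvector, A rⱼ = aⱼ rⱼ, with pairwise distinct real eigenvalues aⱼ satisfying aⱼ > σ₀ for a fixed σ₀ ∈ ℝ. Let σ′ ∈ ℝ with σ′ ≠ 0, let αⱼ ∈ ℝ with αⱼ ≠ 0 for at least one j ∈ J, and set v := σ′ Σ_{j∈J} (aⱼ − σ₀)⁻¹ αⱼ rⱼ. Then ⟨v, P (A − σ₀ I) v⟩ = σ′² Σ_{j∈J} (aⱼ − σ₀)⁻¹ αⱼ² ⟨rⱼ, P rⱼ⟩ > 0. -/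

import Mathlib

open Matrix

lemma P_orthogonal {n : ℕ} (P A : Matrix (Fin n) (Fin n) ℝ)
    (hP : Pᵀ = P) (hPA : (P * A).IsSymm)
    (x y : Fin n → ℝ) (ax ay : ℝ)
    (hx : A.mulVec x = ax • x) (hy : A.mulVec y = ay • y)
    (hne : ax ≠ ay) : x ⬝ᵥ P.mulVec y = 0 := by
  have h1 : x ⬝ᵥ (P * A).mulVec y = ay * (x ⬝ᵥ P.mulVec y) := by
    rw [← Matrix.mulVec_mulVec, hy, Matrix.mulVec_smul, dotProduct_smul, smul_eq_mul]
  have h2 : x ⬝ᵥ (P * A).mulVec y = ax * (x ⬝ᵥ P.mulVec y) := by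
    rw [dotProduct_mulVec, ← Matrix.mulVec_transpose, hPA.eq, ← Matrix.mulVec_mulVec, hx,
      Matrix.mulVec_smul, smul_dotProduct, smul_eq_mul, dotProduct_mulVec,
      ← Matrix.mulVec_transpose, hP]
  have := h1.symm.trans h2
  rcases mul_eq_mul_right_iff.mp this with h | h
  · exact absurd h.symm hne
  · exact h


lemma mulVec_sum' {n : ℕ} {ι : Type*} [Fintype ι] (M : Matrix (Fin n) (Fin n) ℝ)
    (f : ι → Fin n → ℝ) : M.mulVec (∑ j, f j) = ∑ j, M.mulVec (f j) := by
  simp only [← Matrix.mulVecLin_apply]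
  exact map_sum M.mulVecLin f Finset.univ

lemma dotProduct_sum' {n : ℕ} {ι : Type*} [Fintype ι] (x : Fin n → ℝ)
    (f : ι → Fin n → ℝ) : x ⬝ᵥ (∑ j, f j) = ∑ j, x ⬝ᵥ f j := by
  simp only [dotProduct, Finset.sum_apply, Finset.mul_sum]
  exact Finset.sum_comm

lemma sum_dotProduct' {n : ℕ} {ι : Type*} [Fintype ι] (f : ι → Fin n → ℝ)
    (x : Fin n → ℝ) : (∑ j, f j) ⬝ᵥ x = ∑ j, f j ⬝ᵥ x := by
  simp only [dotProduct, Finset.sum_apply, Finset.sum_mul]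
  exact Finset.sum_comm

/-- key strict inequality (contr): with `P` symmetric positive
definite, `P * A` symmetric, `(aⱼ, rⱼ)` eigenpairs of `A` with pairwise
distinct eigenvalues `aⱼ > σ₀`, `σ′ ≠ 0`, some `αⱼ ≠ 0`, and
`v = σ′ Σⱼ (aⱼ − σ₀)⁻¹ αⱼ rⱼ`, one has
`⟨v, P (A − σ₀ I) v⟩ = σ′² Σⱼ (aⱼ − σ₀)⁻¹ αⱼ² ⟨rⱼ, P rⱼ⟩ > 0`. -/
theorem key_strict_inequality {n : ℕ}
    (P A : Matrix (Fin n) (Fin n) ℝ)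
    (hP : P.PosDef) (hPA : (P * A).IsSymm)
    {ι : Type*} [Fintype ι]
    (r : ι → (Fin n → ℝ)) (a : ι → ℝ)
    (hr : ∀ j, r j ≠ 0)
    (heig : ∀ j, A.mulVec (r j) = a j • r j)
    (hdist : Function.Injective a)
    (σ₀ : ℝ) (ha : ∀ j, σ₀ < a j)
    (σ' : ℝ) (hσ' : σ' ≠ 0)
    (α : ι → ℝ) (hα : ∃ j, α j ≠ 0)
    (v : Fin n → ℝ)
    (hv : v = σ' • ∑ j, ((a j - σ₀)⁻¹ * α j) • r j) :
    v ⬝ᵥ P.mulVec ((A - σ₀ • (1 : Matrix (Fin n) (Fin n) ℝ)).mulVec v)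
        = σ' ^ 2 * ∑ j, (a j - σ₀)⁻¹ * α j ^ 2 * (r j ⬝ᵥ P.mulVec (r j)) ∧
      0 < v ⬝ᵥ P.mulVec ((A - σ₀ • (1 : Matrix (Fin n) (Fin n) ℝ)).mulVec v) := by
  have hPsymm : Pᵀ = P := by
    have := hP.isHermitian
    simpa [Matrix.IsHermitian, Matrix.conjTranspose_eq_transpose_of_trivial] using this
  have hne : ∀ j, a j - σ₀ ≠ 0 := fun j => sub_ne_zero.mpr (ne_of_gt (ha j))
  -- orthogonality
  have horth : ∀ i j, i ≠ j → r i ⬝ᵥ P.mulVec (r j) = 0 := fun i j hij =>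
    P_orthogonal P A hPsymm hPA (r i) (r j) (a i) (a j) (heig i) (heig j)
      (fun h => hij (hdist h))
  -- compute (A - σ₀ 1) v
  have hBv : (A - σ₀ • (1 : Matrix (Fin n) (Fin n) ℝ)).mulVec v
      = σ' • ∑ j, α j • r j := by
    rw [hv, Matrix.sub_mulVec, Matrix.smul_mulVec, Matrix.one_mulVec,
      Matrix.mulVec_smul, smul_comm σ₀ σ', ← smul_sub]
    congr 1
    rw [mulVec_sum', Finset.smul_sum, ← Finset.sum_sub_distrib]
    refine Finset.sum_congr rfl fun j _ => ?_
    rw [Matrix.mulVec_smul, heig j, smul_smul, smul_smul, ← sub_smul]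
    have h := hne j
    rw [mul_comm ((a j - σ₀)⁻¹) (α j), mul_assoc, mul_comm σ₀, mul_assoc, ← mul_sub,
      ← mul_sub, inv_mul_cancel₀ (sub_ne_zero.mpr (ne_of_gt (ha j))), mul_one]
  have key : v ⬝ᵥ P.mulVec ((A - σ₀ • (1 : Matrix (Fin n) (Fin n) ℝ)).mulVec v)
      = σ' ^ 2 * ∑ j, (a j - σ₀)⁻¹ * α j ^ 2 * (r j ⬝ᵥ P.mulVec (r j)) := by
    rw [hBv, hv]
    rw [Matrix.mulVec_smul, mulVec_sum', smul_dotProduct, dotProduct_smul,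
      sum_dotProduct']
    rw [smul_eq_mul, smul_eq_mul, ← mul_assoc, ← sq]
    congr 1
    simp only [dotProduct_sum']
    rw [Finset.sum_comm]
    refine Finset.sum_congr rfl fun j _ => ?_
    rw [Finset.sum_eq_single j]
    · rw [Matrix.mulVec_smul, dotProduct_smul, smul_dotProduct, smul_eq_mul, smul_eq_mul]
      ring
    · intro i _ hij
      rw [Matrix.mulVec_smul, dotProduct_smul, smul_dotProduct, smul_eq_mul, smul_eq_mul,
        horth i j hij]
      ring
    · intro h; exact absurd (Finset.mem_univ j) h
  refine ⟨key, ?_⟩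
  rw [key]
  have hterm : ∀ j, 0 ≤ (a j - σ₀)⁻¹ * α j ^ 2 * (r j ⬝ᵥ P.mulVec (r j)) := by
    intro j
    have h1 : 0 ≤ (a j - σ₀)⁻¹ := le_of_lt (inv_pos.mpr (sub_pos.mpr (ha j)))
    have h2 : 0 < r j ⬝ᵥ P.mulVec (r j) := by
      have := hP.dotProduct_mulVec_pos (hr j)
      simpa using this
    positivity
  obtain ⟨j₀, hj₀⟩ := hα
  have hpos : 0 < (a j₀ - σ₀)⁻¹ * α j₀ ^ 2 * (r j₀ ⬝ᵥ P.mulVec (r j₀)) := by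
    have h1 : 0 < (a j₀ - σ₀)⁻¹ := inv_pos.mpr (sub_pos.mpr (ha j₀))
    have h2 : 0 < r j₀ ⬝ᵥ P.mulVec (r j₀) := by
      have := hP.dotProduct_mulVec_pos (hr j₀)
      simpa using this
    positivity
  have hsum : 0 < ∑ j, (a j - σ₀)⁻¹ * α j ^ 2 * (r j ⬝ᵥ P.mulVec (r j)) :=
    Finset.sum_pos' (fun j _ => hterm j) ⟨j₀, Finset.mem_univ j₀, hpos⟩
  positivity
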